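/- Let R be a commutative ring, E(2,R) the subgroup of SL(2,R) generated by all upper and lower triangular matrices of SL(2,R), and 𝒲 the subgroup of SL(2,R) generated by the set of all Cohn matrices {W(α) : α ∈ R}. Then 𝒲 ≤ E(2,R), the index [E(2,R) : 𝒲] is at most the cardinality of the unit group Rˣ, and in particular if Rˣ is finite then 𝒲 is a finite-index subgroup of E(2,R). -/

import Mathlib

open Matrix

/-- The Cohn matrix `W(α) = [[α, 1], [−1, 0]]` as an element of `SL(2,R)`. -/
def CohnMatrix {R : Type*} [CommRing R] (a : R) : Matrix.SpecialLinearGroup (Fin 2) R :=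
  ⟨!![a, 1; -1, 0], by simp [Matrix.det_fin_two_of]⟩

/-- `E(2,R)`: the subgroup of `SL(2,R)` generated by all upper triangular and all lower
triangular matrices. -/
def ElemSubgroup (R : Type*) [CommRing R] : Subgroup (Matrix.SpecialLinearGroup (Fin 2) R) :=
  Subgroup.closure {γ | γ.1 1 0 = 0 ∨ γ.1 0 1 = 0}

/-- `𝒲`: the subgroup of `SL(2,R)` generated by all Cohn matrices `W(α)`, `α ∈ R`. -/
def CohnSubgroup (R : Type*) [CommRing R] : Subgroup (Matrix.SpecialLinearGroup (Fin 2) R) :=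
  Subgroup.closure (Set.range (CohnMatrix (R := R)))

/-!
Cohn matrices generate all of `E(2,R)`, so the index is `1`. Indeed `W(-x) W(0)⁻¹` and
`W(0)⁻¹ W(x)` are the upper and lower transvections with entry `x`, and
`W(0)² W(u) W(u⁻¹) W(u) = diag(u, u⁻¹)` for a unit `u`; since a triangular matrix of
determinant `1` is a diagonal matrix times a transvection, all of them lie in `𝒲`.
Conversely `W(a)` is the product of an upper, a lower and an upper transvection with
entries `1 - a`, `-1`, `1`.
-/

section

open Matrix.SpecialLinearGroup MatrixGroups

variable {R : Type*} [CommRing R]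

@[simp]
lemma coe_cohnMatrix (a : R) : (CohnMatrix a : Matrix (Fin 2) (Fin 2) R) = !![a, 1; -1, 0] := rfl

def diagUnit (u : Rˣ) : SL(2, R) :=
  ⟨!![(u : R), 0; 0, ↑u⁻¹], by simp [det_fin_two_of]⟩

@[simp]
lemma coe_diagUnit (u : Rˣ) :
    (diagUnit u : Matrix (Fin 2) (Fin 2) R) = !![(u : R), 0; 0, ↑u⁻¹] :=
  rfl

abbrev upperTransvection (x : R) : SL(2, R) := transvection zero_ne_one x

abbrev lowerTransvection (x : R) : SL(2, R) := transvection one_ne_zero x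

@[simp]
lemma coe_upperTransvection (x : R) :
    (upperTransvection x : Matrix (Fin 2) (Fin 2) R) = !![1, x; 0, 1] := by
  ext i j; fin_cases i <;> fin_cases j <;> simp [transvection_coe]

@[simp]
lemma coe_lowerTransvection (x : R) :
    (lowerTransvection x : Matrix (Fin 2) (Fin 2) R) = !![1, 0; x, 1] := by
  ext i j; fin_cases i <;> fin_cases j <;> simp [transvection_coe]

lemma upperTransvection_eq_cohnMatrix (x : R) :
    upperTransvection x = CohnMatrix (-x) * (CohnMatrix 0)⁻¹ := by
  rw [eq_mul_inv_iff_mul_eq]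
  apply Subtype.ext
  simp

lemma lowerTransvection_eq_cohnMatrix (x : R) :
    lowerTransvection x = (CohnMatrix 0)⁻¹ * CohnMatrix x := by
  rw [eq_inv_mul_iff_mul_eq]
  apply Subtype.ext
  simp

lemma diagUnit_eq_cohnMatrix (u : Rˣ) :
    diagUnit u =
      CohnMatrix 0 * CohnMatrix 0 * CohnMatrix (u : R) * CohnMatrix (↑u⁻¹ : R) *
        CohnMatrix (u : R) := by
  apply Subtype.ext
  simp

lemma cohnMatrix_eq_transvections (a : R) :
    CohnMatrix a = upperTransvection (1 - a) * lowerTransvection (-1) * upperTransvection 1 := by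
  apply Subtype.ext
  simp

lemma eq_diagUnit_mul_upperTransvection (γ : SL(2, R)) (h : γ 1 0 = 0) :
    ∃ u x, γ = diagUnit u * upperTransvection x := by
  have hdet : γ 0 0 * γ 1 1 = 1 := by
    have := γ.det_coe; rwa [det_fin_two, h, mul_zero, sub_zero] at this
  have hinv : (↑(Units.mkOfMulEqOne _ _ hdet)⁻¹ : R) = γ 1 1 :=
    Units.inv_eq_of_mul_eq_one_right hdet
  refine ⟨Units.mkOfMulEqOne _ _ hdet, γ 1 1 * γ 0 1, ?_⟩
  ext i j
  fin_cases i <;> fin_cases j <;> simp [hinv, h, ← mul_assoc, hdet]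

lemma eq_lowerTransvection_mul_diagUnit (γ : SL(2, R)) (h : γ 0 1 = 0) :
    ∃ u x, γ = lowerTransvection x * diagUnit u := by
  have hdet : γ 0 0 * γ 1 1 = 1 := by
    have := γ.det_coe; rwa [det_fin_two, h, zero_mul, sub_zero] at this
  have hinv : (↑(Units.mkOfMulEqOne _ _ hdet)⁻¹ : R) = γ 1 1 :=
    Units.inv_eq_of_mul_eq_one_right hdet
  refine ⟨Units.mkOfMulEqOne _ _ hdet, γ 1 0 * γ 1 1, ?_⟩
  ext i j
  fin_cases i <;> fin_cases j <;> simp [hinv, h, mul_assoc, mul_comm (γ 1 1), hdet]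

lemma cohnMatrix_mem_cohnSubgroup (a : R) : CohnMatrix a ∈ CohnSubgroup R :=
  Subgroup.subset_closure ⟨a, rfl⟩

lemma upperTransvection_mem_cohnSubgroup (x : R) : upperTransvection x ∈ CohnSubgroup R := by
  rw [upperTransvection_eq_cohnMatrix]
  exact mul_mem (cohnMatrix_mem_cohnSubgroup _) (inv_mem (cohnMatrix_mem_cohnSubgroup _))

lemma lowerTransvection_mem_cohnSubgroup (x : R) : lowerTransvection x ∈ CohnSubgroup R := by
  rw [lowerTransvection_eq_cohnMatrix]
  exact mul_mem (inv_mem (cohnMatrix_mem_cohnSubgroup _)) (cohnMatrix_mem_cohnSubgroup _)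

lemma diagUnit_mem_cohnSubgroup (u : Rˣ) : diagUnit u ∈ CohnSubgroup R := by
  rw [diagUnit_eq_cohnMatrix]
  repeat' apply mul_mem
  all_goals exact cohnMatrix_mem_cohnSubgroup _

lemma elemSubgroup_le_cohnSubgroup : ElemSubgroup R ≤ CohnSubgroup R := by
  rw [ElemSubgroup, Subgroup.closure_le]
  rintro γ (h | h)
  · obtain ⟨u, x, rfl⟩ := eq_diagUnit_mul_upperTransvection γ h
    exact mul_mem (diagUnit_mem_cohnSubgroup u) (upperTransvection_mem_cohnSubgroup x)
  · obtain ⟨u, x, rfl⟩ := eq_lowerTransvection_mul_diagUnit γ h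
    exact mul_mem (lowerTransvection_mem_cohnSubgroup x) (diagUnit_mem_cohnSubgroup u)

lemma upperTransvection_mem_elemSubgroup (x : R) : upperTransvection x ∈ ElemSubgroup R :=
  Subgroup.subset_closure (Or.inl (by simp))

lemma lowerTransvection_mem_elemSubgroup (x : R) : lowerTransvection x ∈ ElemSubgroup R :=
  Subgroup.subset_closure (Or.inr (by simp))

lemma cohnSubgroup_le_elemSubgroup : CohnSubgroup R ≤ ElemSubgroup R := by
  rw [CohnSubgroup, Subgroup.closure_le]
  rintro _ ⟨a, rfl⟩
  rw [cohnMatrix_eq_transvections]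
  exact mul_mem (mul_mem (upperTransvection_mem_elemSubgroup _)
    (lowerTransvection_mem_elemSubgroup _)) (upperTransvection_mem_elemSubgroup _)

theorem cohnSubgroup_eq_elemSubgroup : CohnSubgroup R = ElemSubgroup R :=
  le_antisymm cohnSubgroup_le_elemSubgroup elemSubgroup_le_cohnSubgroup

end

/-- `𝒲 ≤ E(2,R)`, the index of `𝒲` in `E(2,R)` is at most the cardinality of `Rˣ`
(expressed by an injection of the coset space into `Rˣ`), and in particular if `Rˣ` is
finite then `𝒲` has finite index in `E(2,R)`. -/
theorem cohnSubgroup_finite_index {R : Type*} [CommRing R] :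
    CohnSubgroup R ≤ ElemSubgroup R ∧
    (∃ f : (ElemSubgroup R) ⧸ ((CohnSubgroup R).subgroupOf (ElemSubgroup R)) → Rˣ,
      Function.Injective f) ∧
    (Finite Rˣ → ((CohnSubgroup R).subgroupOf (ElemSubgroup R)).FiniteIndex) := by
  have htop : (CohnSubgroup R).subgroupOf (ElemSubgroup R) = ⊤ := by
    rw [cohnSubgroup_eq_elemSubgroup, Subgroup.subgroupOf_self]
  refine ⟨cohnSubgroup_le_elemSubgroup, ?_, fun _ => ?_⟩
  · rw [htop]
    have := QuotientGroup.subsingleton_quotient_top (G := ElemSubgroup R)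
    exact ⟨fun _ => 1, Function.injective_of_subsingleton _⟩
  · rw [htop]
    infer_instance
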